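/- Let $u \in L^2(\mathbb{R})$ with $\hat u$ supported in $\{a \le |\omega| \le b\}$ for some $0 < a \le b$, and suppose $(u_j)_{j\in\mathbb{Z}}$ with $u_j(x) = 2^j u(2^j x)$ is a TI-frame of $L^2(\mathbb{R})$ with bounds $A, B$. Define $v_j$ by $\hat v_j(\omega) = 2^{-j}(-i\omega)\hat u_j(\omega)$. Then $(v_j)_{j\in\mathbb{Z}}$ is a TI-frame of $L^2(\mathbb{R})$ with bounds $a^2 A$ and $b^2 B$, and $(u_j, v_j, 2^{-j})_{j\in\mathbb{Z}}$ satisfies the quasi-singular value relation $v_j^* \ast (\mathcal{I}f) = 2^{-j}(u_j^* \ast f)$ for all $f$ in the domain of the integration operator $\mathcal{I}$; i.e., it is a TI-DFD for $\mathcal{I}$. -/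

import Mathlib

open MeasureTheory Complex Real
open scoped Classical

noncomputable section

/-- `L2R` is the Hilbert space `L²(ℝ, ℂ)`. -/
abbrev L2R := MeasureTheory.Lp ℂ 2 (volume : Measure ℝ)

/-- An extension of the Fourier transform (normalization `f̂(ω) = ∫ f(x) e^{-ixω} dx`)
to a linear bijection of `L²(ℝ)` satisfying the Plancherel identity `‖f̂‖² = 2π ‖f‖²`. -/
structure FourierL2R where
  F : L2R ≃ₗ[ℂ] L2R
  plancherel : ∀ f : L2R, ‖F f‖ ^ 2 = (2 * Real.pi) * ‖f‖ ^ 2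
  eq_integral : ∀ f : L2R, MeasureTheory.Integrable (f : ℝ → ℂ) →
    (F f : ℝ → ℂ) =ᵐ[volume]
      fun ω => ∫ x : ℝ, Complex.exp (-(Complex.I * ω * x)) * f x

/-- The convolution `u^* ∗ f := 𝓕⁻¹((conj 𝓕u) ⬝ 𝓕f)`, well defined in `L²` whenever
`𝓕u ∈ L^∞`. -/
def starConvR (Φ : FourierL2R) (u f : L2R) : L2R :=
  if h : MemLp (fun ω => (starRingEnd ℂ) ((Φ.F u : ℝ → ℂ) ω) * (Φ.F f : ℝ → ℂ) ω)
      2 (volume : Measure ℝ)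
  then Φ.F.symm (h.toLp _) else 0

/-- `(u_λ)` is a translation invariant frame of `L²(ℝ)` with bounds `A, B`. -/
def IsTIFrameR {Λ : Type*} (Φ : FourierL2R) (u : Λ → L2R) (A B : ℝ) : Prop :=
  (∀ l : Λ, MemLp ((Φ.F (u l) : ℝ → ℂ)) ⊤ (volume : Measure ℝ)) ∧
  0 < A ∧ 0 < B ∧
  ∀ f : L2R,
    A * ‖f‖ ^ 2 ≤ ∑' l : Λ, ‖starConvR Φ (u l) f‖ ^ 2 ∧
    ∑' l : Λ, ‖starConvR Φ (u l) f‖ ^ 2 ≤ B * ‖f‖ ^ 2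

/-- Domain of the integration operator: `f ∈ L²` with `(iω)⁻¹ f̂(ω) ∈ L²`. -/
def IDom (Φ : FourierL2R) : Set L2R :=
  {f : L2R | MemLp (fun ω : ℝ => (Complex.I * ω)⁻¹ * (Φ.F f : ℝ → ℂ) ω) 2 (volume : Measure ℝ)}

/-- The integration operator `𝓘` on `L²(ℝ)`, defined by `(𝓘f)^(ω) = (iω)⁻¹ f̂(ω)`. -/
def Iop (Φ : FourierL2R) (f : L2R) (hf : f ∈ IDom Φ) : L2R :=
  Φ.F.symm (MemLp.toLp _ hf)

/-!
Everything happens on the Fourier side, where convolution with `u_j^*` is multiplication by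
`conj û_j`. Dilation commutes with the Fourier transform, `û_j(ω) = û(2^{-j} ω)`: this holds for
integrable functions by a change of variables and extends to `L²` by continuity. Hence `û_j`
lives where `a ≤ 2^{-j} |ω| ≤ b`, and there `|v̂_j| = 2^{-j} |ω| |û_j|` lies between `a |û_j|` and
`b |û_j|`; by Plancherel this compares `‖v_j^* ∗ f‖` with `‖u_j^* ∗ f‖` term by term. The relation
with `𝓘` is the identity `conj(-iω) (iω)⁻¹ = 1` of Fourier symbols.
-/

open scoped ENNReal ComplexConjugate

namespace MeasureTheory

theorem Lp.continuousLinearMap_ext_of_integrable {α E F 𝕜 : Type*} [MeasurableSpace α]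
    {μ : Measure α} [NormedAddCommGroup E] [NormedField 𝕜] [NormedSpace 𝕜 E]
    [TopologicalSpace F] [AddCommMonoid F] [Module 𝕜 F] [T2Space F]
    {p : ℝ≥0∞} [Fact (1 ≤ p)] (hp : p ≠ ∞) {T₁ T₂ : Lp E p μ →L[𝕜] F}
    (h : ∀ f : Lp E p μ, Integrable f μ → T₁ f = T₂ f) : T₁ = T₂ := by
  ext f
  induction f using Lp.induction hp with
  | indicatorConst c hs hμs =>
    exact h _ (integrable_indicatorConstLp hs hμs.ne c)
  | add _ _ _ hf hg => rw [map_add, map_add, hf, hg]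
  | isClosed => exact isClosed_eq T₁.continuous T₂.continuous

variable {E : Type*} [NormedAddCommGroup E] {p : ℝ≥0∞} {c : ℝ}

theorem quasiMeasurePreserving_const_mul (hc : c ≠ 0) :
    Measure.QuasiMeasurePreserving (c * ·) (volume : Measure ℝ) volume :=
  ⟨measurable_const_mul c, by
    rw [Real.map_volume_mul_left hc]; exact Measure.smul_absolutelyContinuous⟩

theorem eLpNorm_comp_const_mul {f : ℝ → E} (hf : AEStronglyMeasurable f) (hc : c ≠ 0) :
    eLpNorm (fun x => f (c * x)) p volume
      = ENNReal.ofReal |c⁻¹| ^ (1 / p).toReal * eLpNorm f p volume := by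
  have hmap := Real.map_volume_mul_left hc
  rw [← Function.comp_def, ← eLpNorm_map_measure ?_ (measurable_const_mul c).aemeasurable, hmap,
    eLpNorm_smul_measure_of_ne_zero (by simpa using hc), smul_eq_mul]
  rw [hmap]
  exact hf.mono_ac Measure.smul_absolutelyContinuous

theorem MemLp.comp_const_mul {f : ℝ → E} (hf : MemLp f p) (hc : c ≠ 0) :
    MemLp (fun x => f (c * x)) p :=
  ⟨hf.1.comp_quasiMeasurePreserving (quasiMeasurePreserving_const_mul hc), by
    rw [eLpNorm_comp_const_mul hf.1 hc]
    exact ENNReal.mul_lt_top (by finiteness) hf.2⟩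

variable (𝕜 : Type*) [NormedField 𝕜] [NormedSpace 𝕜 E] [Fact (1 ≤ p)]

def Lp.compConstMul (hc : c ≠ 0) :
    Lp E p (volume : Measure ℝ) →L[𝕜] Lp E p (volume : Measure ℝ) :=
  LinearMap.mkContinuous
    { toFun f := ((Lp.memLp f).comp_const_mul hc).toLp _
      map_add' f g := by
        rw [← MemLp.toLp_add]
        exact MemLp.toLp_congr _ _
          ((quasiMeasurePreserving_const_mul hc).ae_eq (Lp.coeFn_add f g))
      map_smul' r f := by
        rw [RingHom.id_apply, ← MemLp.toLp_const_smul]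
        exact MemLp.toLp_congr _ _
          ((quasiMeasurePreserving_const_mul hc).ae_eq (Lp.coeFn_smul r f)) }
    (|c⁻¹| ^ (1 / p).toReal) fun f => by
      rw [LinearMap.coe_mk, AddHom.coe_mk, Lp.norm_toLp, Lp.norm_def,
        eLpNorm_comp_const_mul (Lp.aestronglyMeasurable f) hc, ENNReal.toReal_mul,
        ← ENNReal.toReal_rpow, ENNReal.toReal_ofReal (abs_nonneg _)]

theorem Lp.coeFn_compConstMul (hc : c ≠ 0) (f : Lp E p (volume : Measure ℝ)) :
    Lp.compConstMul 𝕜 hc f =ᵐ[volume] fun x => f (c * x) :=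
  MemLp.coeFn_toLp ((Lp.memLp f).comp_const_mul hc)

end MeasureTheory

namespace FourierL2R

variable (Φ : FourierL2R)

theorem norm_F (f : L2R) : ‖Φ.F f‖ = √(2 * π) * ‖f‖ := by
  rw [← Real.sqrt_sq (norm_nonneg (Φ.F f)), Φ.plancherel, Real.sqrt_mul (by positivity),
    Real.sqrt_sq (norm_nonneg f)]

theorem norm_F_symm (g : L2R) : ‖Φ.F.symm g‖ = (√(2 * π))⁻¹ * ‖g‖ := by
  rw [eq_inv_mul_iff_mul_eq₀ (by positivity), ← Φ.norm_F, LinearEquiv.apply_symm_apply]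

def toCLM : L2R →L[ℂ] L2R :=
  Φ.F.toLinearMap.mkContinuous _ fun f => (Φ.norm_F f).le

@[simp]
theorem toCLM_apply (f : L2R) : Φ.toCLM f = Φ.F f := rfl

theorem integral_exp_mul_comp_const_mul (g : ℝ → ℂ) {c : ℝ} (hc : c ≠ 0) (ω : ℝ) :
    ∫ x : ℝ, exp (-(I * ω * x)) * g (c * x)
      = (|c|⁻¹ : ℝ) * ∫ y : ℝ, exp (-(I * ↑(c⁻¹ * ω) * y)) * g y := by
  have := Measure.integral_comp_mul_left (fun y : ℝ => exp (-(I * ↑(c⁻¹ * ω) * y)) * g y) c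
  rw [abs_inv, Complex.real_smul] at this
  rw [← this]
  congr 1 with x
  rw [show (I * ↑(c⁻¹ * ω) * ↑(c * x) : ℂ) = I * ω * x by
    push_cast; field_simp [ofReal_ne_zero.2 hc]]

theorem F_compConstMul {c : ℝ} (hc : c ≠ 0) (f : L2R) :
    Φ.F (Lp.compConstMul ℂ hc f)
      = ((|c|⁻¹ : ℝ) : ℂ) • Lp.compConstMul ℂ (inv_ne_zero hc) (Φ.F f) := by
  suffices Φ.toCLM.comp (Lp.compConstMul ℂ hc)
      = ((|c|⁻¹ : ℝ) : ℂ) • (Lp.compConstMul ℂ (inv_ne_zero hc)).comp Φ.toCLM from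
    DFunLike.congr_fun this f
  refine Lp.continuousLinearMap_ext_of_integrable ENNReal.ofNat_ne_top fun f hf => Lp.ext ?_
  have hDf : Integrable (Lp.compConstMul ℂ hc f : ℝ → ℂ) :=
    ((integrable_comp_mul_left_iff _ hc).2 hf).congr (Lp.coeFn_compConstMul ℂ hc f).symm
  filter_upwards [Φ.eq_integral _ hDf,
    (quasiMeasurePreserving_const_mul (inv_ne_zero hc)).ae_eq (Φ.eq_integral f hf),
    Lp.coeFn_smul ((|c|⁻¹ : ℝ) : ℂ) (Lp.compConstMul ℂ (inv_ne_zero hc) (Φ.F f)),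
    Lp.coeFn_compConstMul ℂ (inv_ne_zero hc) (Φ.F f)] with ω h₁ h₂ h₃ h₄
  simp only [ContinuousLinearMap.comp_apply, FunLike.coe_smul, Pi.smul_apply, toCLM_apply]
  have hFf_ω : Φ.F f (c⁻¹ * ω) = ∫ x : ℝ, exp (-(I * ↑(c⁻¹ * ω) * x)) * f x := h₂
  rw [h₁, h₃, Pi.smul_apply, h₄, hFf_ω, smul_eq_mul, ← integral_exp_mul_comp_const_mul _ hc]
  exact integral_congr_ae ((Lp.coeFn_compConstMul ℂ hc f).mono fun x hx => congrArg _ hx)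

theorem F_dilation {c : ℝ} (hc : 0 < c) {f : ℝ → ℂ} (hf : MemLp f 2)
    (hfc : MemLp (fun x => (c : ℂ) * f (c * x)) 2) :
    (Φ.F (hfc.toLp _) : ℝ → ℂ) =ᵐ[volume] fun ω => Φ.F (hf.toLp f) (c⁻¹ * ω) := by
  have hdil : hfc.toLp _ = (c : ℂ) • Lp.compConstMul ℂ hc.ne' (hf.toLp f) := by
    refine Lp.ext (hfc.coeFn_toLp.trans ?_)
    filter_upwards [Lp.coeFn_smul (c : ℂ) (Lp.compConstMul ℂ hc.ne' (hf.toLp f)),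
      Lp.coeFn_compConstMul ℂ hc.ne' (hf.toLp f),
      (quasiMeasurePreserving_const_mul hc.ne').ae_eq hf.coeFn_toLp] with x h₁ h₂ h₃
    rw [h₁, Pi.smul_apply, h₂, smul_eq_mul]
    exact congrArg _ h₃.symm
  rw [hdil, map_smul, F_compConstMul, smul_smul, abs_of_pos hc, ← ofReal_mul,
    mul_inv_cancel₀ hc.ne', ofReal_one, one_smul]
  exact Lp.coeFn_compConstMul ℂ _ _

theorem starConvR_of_memLp {w f : L2R}
    (h : MemLp (fun ω => conj (Φ.F w ω) * Φ.F f ω) 2) :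
    starConvR Φ w f = Φ.F.symm (h.toLp _) :=
  dif_pos h

theorem starConvR_zero_right (w : L2R) : starConvR Φ w 0 = 0 := by
  rw [starConvR]
  split_ifs with h
  · rw [LinearEquiv.map_eq_zero_iff]
    have hF0 : (Φ.F 0 : ℝ → ℂ) =ᵐ[volume] 0 := by
      rw [map_zero]; exact Lp.coeFn_zero ℂ 2 volume
    refine Lp.ext (h.coeFn_toLp.trans ?_)
    filter_upwards [hF0, Lp.coeFn_zero ℂ 2 volume] with ω h₁ h₂
    simp only [h₁, h₂, Pi.zero_apply, mul_zero]
  · rfl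

theorem norm_starConvR_le_mul {w u : L2R} {C : ℝ} (hu : MemLp (Φ.F u : ℝ → ℂ) ⊤)
    (h : ∀ᵐ ω, ‖Φ.F w ω‖ ≤ C * ‖Φ.F u ω‖) (f : L2R) :
    ‖starConvR Φ w f‖ ≤ C * ‖starConvR Φ u f‖ := by
  have hw : MemLp (Φ.F w : ℝ → ℂ) ⊤ := hu.of_le_mul (Lp.aestronglyMeasurable _) h
  have hwf : MemLp (fun ω => conj (Φ.F w ω) * Φ.F f ω) 2 := (Lp.memLp _).mul' hw.star
  have huf : MemLp (fun ω => conj (Φ.F u ω) * Φ.F f ω) 2 := (Lp.memLp _).mul' hu.star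
  rw [starConvR_of_memLp Φ hwf, starConvR_of_memLp Φ huf, norm_F_symm, norm_F_symm,
    mul_left_comm]
  refine mul_le_mul_of_nonneg_left (Lp.norm_le_mul_norm_of_ae_le_mul ?_) (by positivity)
  filter_upwards [hwf.coeFn_toLp, huf.coeFn_toLp, h] with ω h₁ h₂ hω
  rw [h₁, h₂, norm_mul, norm_mul, RCLike.norm_conj, RCLike.norm_conj, ← mul_assoc]
  exact mul_le_mul_of_nonneg_right hω (norm_nonneg _)

theorem starConvR_Iop {w u f : L2R} (hf : f ∈ IDom Φ) {s : ℝ} (hu : MemLp (Φ.F u : ℝ → ℂ) ⊤)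
    (hw : Φ.F w =ᵐ[volume] fun ω => (s : ℂ) * -(I * ω) * Φ.F u ω) :
    starConvR Φ w (Iop Φ f hf) = s • starConvR Φ u f := by
  have huf : MemLp (fun ω => conj (Φ.F u ω) * Φ.F f ω) 2 := (Lp.memLp _).mul' hu.star
  have hIf : Φ.F (Iop Φ f hf) =ᵐ[volume] fun ω => (I * ω)⁻¹ * Φ.F f ω := by
    rw [Iop, LinearEquiv.apply_symm_apply]
    exact MemLp.coeFn_toLp hf
  have key : (fun ω => conj (Φ.F w ω) * Φ.F (Iop Φ f hf) ω)
      =ᵐ[volume] fun ω => (s : ℂ) * (conj (Φ.F u ω) * Φ.F f ω) := by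
    filter_upwards [hw, hIf, Measure.ae_ne volume 0] with ω h₁ h₂ hω
    rw [h₁, h₂, map_mul, map_mul, map_neg, map_mul, conj_I, conj_ofReal, conj_ofReal]
    field_simp [ofReal_ne_zero.2 hω]
  have hwf := (huf.const_mul (s : ℂ)).ae_eq key.symm
  have hsmul : hwf.toLp _ = (s : ℂ) • huf.toLp _ := by
    rw [← MemLp.toLp_const_smul]
    exact MemLp.toLp_congr _ _ key
  rw [starConvR_of_memLp Φ hwf, starConvR_of_memLp Φ huf, hsmul, map_smul]
  exact Complex.coe_smul _ _

end FourierL2R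

namespace IsTIFrameR

variable {Λ : Type*} {Φ : FourierL2R} {u : Λ → L2R} {A B : ℝ}

theorem summable (h : IsTIFrameR Φ u A B) (f : L2R) :
    Summable fun l => ‖starConvR Φ (u l) f‖ ^ 2 := by
  by_contra hs
  have hlow := (h.2.2.2 f).1
  rw [tsum_eq_zero_of_not_summable hs] at hlow
  have hf : f = 0 := by
    have hf_sq : ‖f‖ ^ 2 ≤ 0 := nonpos_of_mul_nonpos_right hlow h.2.1
    exact norm_eq_zero.1 (pow_eq_zero_iff two_ne_zero |>.1 (hf_sq.antisymm (by positivity)))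
  subst hf
  simp [FourierL2R.starConvR_zero_right] at hs

theorem of_ae_norm_le {w : Λ → L2R} {a b : ℝ} (h : IsTIFrameR Φ u A B) (ha : 0 < a) (hb : 0 < b)
    (hw : ∀ l, ∀ᵐ ω, a * ‖Φ.F (u l) ω‖ ≤ ‖Φ.F (w l) ω‖ ∧ ‖Φ.F (w l) ω‖ ≤ b * ‖Φ.F (u l) ω‖) :
    IsTIFrameR Φ w (a ^ 2 * A) (b ^ 2 * B) := by
  obtain ⟨hu, hA, hB, hbounds⟩ := h
  have hw' : ∀ l, MemLp (Φ.F (w l) : ℝ → ℂ) ⊤ := fun l =>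
    (hu l).of_le_mul (Lp.aestronglyMeasurable _) ((hw l).mono fun _ h => h.2)
  refine ⟨hw', by positivity, by positivity, fun f => ?_⟩
  set x := fun l => ‖starConvR Φ (u l) f‖ ^ 2
  set y := fun l => ‖starConvR Φ (w l) f‖ ^ 2
  have hlow : ∀ l, a ^ 2 * x l ≤ y l := fun l => by
    have := Φ.norm_starConvR_le_mul (hw' l) ((hw l).mono fun ω h =>
      (le_inv_mul_iff₀ ha).2 h.1) f
    simp only [x, y, ← mul_pow]
    gcongr
    exact (le_inv_mul_iff₀ ha).1 this
  have hup : ∀ l, y l ≤ b ^ 2 * x l := fun l => by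
    simp only [x, y, ← mul_pow]
    gcongr
    exact Φ.norm_starConvR_le_mul (hu l) ((hw l).mono fun _ h => h.2) f
  have hx : Summable x := IsTIFrameR.summable ⟨hu, hA, hB, hbounds⟩ f
  have hy : Summable y := .of_nonneg_of_le (fun _ => by positivity) hup (hx.mul_left _)
  constructor
  · calc a ^ 2 * A * ‖f‖ ^ 2 ≤ a ^ 2 * ∑' l, x l := by
          rw [mul_assoc]; exact mul_le_mul_of_nonneg_left (hbounds f).1 (by positivity)
      _ = ∑' l, a ^ 2 * x l := tsum_mul_left.symm
      _ ≤ ∑' l, y l := (hx.mul_left _).tsum_le_tsum hlow hy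
  · calc ∑' l, y l ≤ ∑' l, b ^ 2 * x l := hy.tsum_le_tsum hup (hx.mul_left _)
      _ = b ^ 2 * ∑' l, x l := tsum_mul_left
      _ ≤ b ^ 2 * B * ‖f‖ ^ 2 := by
          rw [mul_assoc]; exact mul_le_mul_of_nonneg_left (hbounds f).2 (by positivity)

end IsTIFrameR

theorem norm_ofReal_mul_neg_I_mul_bounds {a b s ω : ℝ} {z : ℂ}
    (h : z ≠ 0 → a ≤ |s * ω| ∧ |s * ω| ≤ b) :
    a * ‖z‖ ≤ ‖(s : ℂ) * -(I * ω) * z‖ ∧ ‖(s : ℂ) * -(I * ω) * z‖ ≤ b * ‖z‖ := by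
  rcases eq_or_ne z 0 with rfl | hz
  · simp
  have hnorm : ‖(s : ℂ) * -(I * ω) * z‖ = |s * ω| * ‖z‖ := by
    simp [abs_mul]
  rw [hnorm]
  exact ⟨mul_le_mul_of_nonneg_right (h hz).1 (norm_nonneg z),
    mul_le_mul_of_nonneg_right (h hz).2 (norm_nonneg z)⟩

/-- **TI-WVD for the integration operator.** Let `u ∈ L²(ℝ)` with `û`
supported in the annulus `{a ≤ |ω| ≤ b}`, `0 < a ≤ b`, and suppose the dilations
`u_j(x) = 2^j u(2^j x)` form a TI-frame with bounds `A, B`. Define `v_j` by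
`v̂_j(ω) = 2^{-j}(-iω) û_j(ω)`. Then `(v_j)` is a TI-frame with bounds `a²A, b²B`, and
`v_j^* ∗ (𝓘f) = 2^{-j} (u_j^* ∗ f)` for every `f ∈ dom 𝓘`; i.e. `(u_j, v_j, 2^{-j})`
is a TI-DFD for `𝓘`. -/
theorem ti_wvd_for_integration (Φ : FourierL2R) (u : ℝ → ℂ)
    (hu : MemLp u 2 (volume : Measure ℝ))
    (a b : ℝ) (ha : 0 < a) (hab : a ≤ b)
    (hsupp : ∀ᵐ ω : ℝ ∂(volume : Measure ℝ),
      (Φ.F (hu.toLp u) : ℝ → ℂ) ω ≠ 0 → a ≤ |ω| ∧ |ω| ≤ b)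
    (huj : ∀ j : ℤ, MemLp (fun x : ℝ => (((2 : ℝ) ^ j : ℝ) : ℂ) * u ((2 : ℝ) ^ j * x))
      2 (volume : Measure ℝ))
    (A B : ℝ) (hframe : IsTIFrameR Φ (fun j : ℤ => (huj j).toLp _) A B)
    (v : ℤ → L2R)
    (hv : ∀ j : ℤ, (Φ.F (v j) : ℝ → ℂ) =ᵐ[(volume : Measure ℝ)]
      fun ω : ℝ => (((2 : ℝ) ^ (-j) : ℝ) : ℂ) * (-(Complex.I * ω)) *
        (Φ.F ((huj j).toLp _) : ℝ → ℂ) ω) :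
    IsTIFrameR Φ v (a ^ 2 * A) (b ^ 2 * B) ∧
    ∀ (f : L2R) (hf : f ∈ IDom Φ) (j : ℤ),
      starConvR Φ (v j) (Iop Φ f hf) =
        ((2 : ℝ) ^ (-j) : ℝ) • starConvR Φ ((huj j).toLp _) f := by
  refine ⟨hframe.of_ae_norm_le ha (ha.trans_le hab) fun j => ?_,
    fun f hf j => Φ.starConvR_Iop hf (hframe.1 j) (hv j)⟩
  have hc : (0 : ℝ) < 2 ^ j := zpow_pos two_pos j
  filter_upwards [hv j, Φ.F_dilation hc hu (huj j),
    (quasiMeasurePreserving_const_mul (inv_ne_zero hc.ne')).ae hsupp] with ω hvω huω hsω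
  rw [hvω, huω, zpow_neg]
  exact norm_ofReal_mul_neg_I_mul_bounds hsω

end
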